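/- Pointwise stabilizers of clones are copies of Thompson's group V (Proposition 5.2): let C be a Cantor algebra free on one generator and let X be a clone of C. Then the pointwise stabilizer subgroup V(X) = {v ∈ Aut(C) | ∀ x ∈ X, v x = x} is isomorphic as a group to Aut(C) (there exists a group isomorphism V(X) ≃* Aut(C)). -/

import Mathlib

open CategoryTheory


/-- A Cantor algebra: a type with a bijection `μ : X × X ≃ X`. -/
structure CantorStr (X : Type) where
  mu : X × X ≃ X

/-- A homomorphism of Cantor algebras: a map commuting with the multiplications. -/
def IsCantorHom {C X : Type} (hC : CantorStr C) (hX : CantorStr X) (f : C → X) : Prop :=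
  ∀ x y : C, f (hC.mu (x, y)) = hX.mu (f x, f y)

/-- `C` is the free Cantor algebra on the generators `b : Fin r → C`. -/
def IsFreeCantorOn {C : Type} (hC : CantorStr C) {r : ℕ} (b : Fin r → C) : Prop :=
  ∀ (X : Type) (hX : CantorStr X) (x : Fin r → X),
    ∃! f : C → X, IsCantorHom hC hX f ∧ ∀ i, f (b i) = x i

/-- The automorphism group of a Cantor algebra, as a subgroup of the permutation group. -/
def cantorAut {C : Type} (hC : CantorStr C) : Subgroup (Equiv.Perm C) where
  carrier := {f : Equiv.Perm C | IsCantorHom hC hC f}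
  one_mem' := fun _ _ => rfl
  mul_mem' := by
    intro a b ha hb x y
    simp only [Equiv.Perm.coe_mul, Function.comp_apply, hb x y, ha (b x) (b y)]
  inv_mem' := by
    intro a ha x y
    apply a.injective
    rw [Equiv.Perm.coe_inv, Equiv.apply_symm_apply, ha, Equiv.apply_symm_apply, Equiv.apply_symm_apply]

/-- The pointwise stabilizer `V(X)` of a subset `X ⊆ C` in the automorphism group. -/
def fixCantor {C : Type} (hC : CantorStr C) (X : Set C) : Subgroup (cantorAut hC) where
  carrier := {v | ∀ x ∈ X, (v : Equiv.Perm C) x = x}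
  one_mem' := fun _ _ => rfl
  mul_mem' := by
    intro a b ha hb x hx
    simp only [Subgroup.coe_mul, Equiv.Perm.coe_mul, Function.comp_apply, hb x hx, ha x hx]
  inv_mem' := by
    intro a ha x hx
    replace ha := ha x hx
    show ((a : Equiv.Perm C)⁻¹ : Equiv.Perm C) x = x
    apply (a : Equiv.Perm C).injective
    rw [Equiv.Perm.coe_inv, Equiv.apply_symm_apply, ha]

/-- A subalgebra: a subset closed under `μ`, `λ` and `ρ`. -/
def IsCantorSubalgebra {C : Type} (hC : CantorStr C) (S : Set C) : Prop :=
  (∀ x ∈ S, ∀ y ∈ S, hC.mu (x, y) ∈ S) ∧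
    ∀ x ∈ S, (hC.mu.symm x).1 ∈ S ∧ (hC.mu.symm x).2 ∈ S

/-- The subalgebra generated by a subset: the smallest subalgebra containing it. -/
def genCantorSubalgebra {C : Type} (hC : CantorStr C) (A : Set C) : Set C :=
  ⋂₀ {S : Set C | IsCantorSubalgebra hC S ∧ A ⊆ S}

/-- A clone: a nonempty, proper, finitely generated subalgebra. -/
def IsClone {C : Type} (hC : CantorStr C) (X : Set C) : Prop :=
  IsCantorSubalgebra hC X ∧ X.Nonempty ∧ X ≠ Set.univ ∧
    ∃ F : Set C, F.Finite ∧ X = genCantorSubalgebra hC F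

/-!
The free Cantor algebra on one generator is modelled by the prefix maps of Cantor space
`Stream' Bool`: maps that, below some depth `n`, replace the first `n` letters of a sequence by
a word depending only on those letters. Here `μ(f, g)` applies `f` or `g` to the tail according
to the first letter, and the identity is the free generator. Every endomorphism `v` of this
algebra is postcomposition with `v id`, so its automorphism group is the group of invertible
prefix maps.
A subalgebra generated by finitely many `f` consists of the maps with values in the clopen set
`A = ⋃ range f`, and its pointwise stabilizer is the group of invertible prefix maps fixing `A`
pointwise. When the subalgebra is proper, `Aᶜ` is a nonempty clopen set, hence the image of a
prefix-map embedding `κ` of Cantor space, and conjugation by `κ` identifies that stabilizer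
with the group of all invertible prefix maps.
-/

namespace CantorStr

variable {C : Type} (hC : CantorStr C)

/-- `child false` and `child true` are the maps `λ` and `ρ`. -/
def child (b : Bool) (x : C) : C := cond b (hC.mu.symm x).2 (hC.mu.symm x).1

def descend (w : List Bool) (x : C) : C := w.foldl (fun y b => hC.child b y) x

@[simp] lemma mu_child (x : C) : hC.mu (hC.child false x, hC.child true x) = x :=
  hC.mu.apply_symm_apply x

@[simp] lemma child_mu (b : Bool) (x y : C) : hC.child b (hC.mu (x, y)) = cond b y x := by
  cases b <;> simp [child]

@[simp] lemma descend_cons (b : Bool) (w : List Bool) (x : C) :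
    hC.descend (b :: w) x = hC.descend w (hC.child b x) := rfl

lemma descend_append (u w : List Bool) (x : C) :
    hC.descend (u ++ w) x = hC.descend w (hC.descend u x) :=
  List.foldl_append

lemma descend_concat (w : List Bool) (b : Bool) (x : C) :
    hC.descend (w ++ [b]) x = hC.child b (hC.descend w x) := by
  rw [descend_append]; rfl

end CantorStr

section Hom

variable {C D E : Type} {hC : CantorStr C} {hD : CantorStr D} {hE : CantorStr E}

lemma IsCantorHom.comp {g : D → E} {f : C → D} (hg : IsCantorHom hD hE g)
    (hf : IsCantorHom hC hD f) : IsCantorHom hC hE (g ∘ f) := fun x y => by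
  simp only [Function.comp, hf x y, hg (f x) (f y)]

lemma isCantorHom_id : IsCantorHom hC hC id := fun _ _ => rfl

lemma IsCantorHom.map_child {f : C → D} (hf : IsCantorHom hC hD f) (b : Bool) (x : C) :
    f (hC.child b x) = hD.child b (f x) := by
  conv_rhs => rw [← hC.mu_child x, hf, CantorStr.child_mu]
  cases b <;> rfl

lemma IsCantorHom.symm {e : C ≃ D} (he : IsCantorHom hC hD e) : IsCantorHom hD hC e.symm :=
  fun x y => e.injective (by simp [he (e.symm x) (e.symm y)])

end Hom

section Subalgebra

variable {C D : Type} {hC : CantorStr C} {hD : CantorStr D} {S : Set C}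

lemma IsCantorSubalgebra.of_child (hmu : ∀ x ∈ S, ∀ y ∈ S, hC.mu (x, y) ∈ S)
    (hchild : ∀ x ∈ S, ∀ b, hC.child b x ∈ S) :
    IsCantorSubalgebra hC S :=
  ⟨hmu, fun x hx => ⟨hchild x hx false, hchild x hx true⟩⟩

lemma IsCantorSubalgebra.child_mem (hS : IsCantorSubalgebra hC S) (b : Bool) {x : C}
    (hx : x ∈ S) : hC.child b x ∈ S := by
  cases b
  exacts [(hS.2 x hx).1, (hS.2 x hx).2]

lemma IsCantorSubalgebra.descend_mem (hS : IsCantorSubalgebra hC S) (w : List Bool) {x : C}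
    (hx : x ∈ S) : hC.descend w x ∈ S := by
  induction w generalizing x with
  | nil => exact hx
  | cons b w ih => exact ih (hS.child_mem b hx)

lemma IsCantorSubalgebra.mem_of_forall_descend_mem (hS : IsCantorSubalgebra hC S) {n : ℕ}
    {x : C} (h : ∀ w : List Bool, w.length = n → hC.descend w x ∈ S) : x ∈ S := by
  induction n generalizing x with
  | zero => exact h [] rfl
  | succ n ih =>
    rw [← hC.mu_child x]
    exact hS.1 _ (ih fun w hw => h (false :: w) (by simp [hw]))
      _ (ih fun w hw => h (true :: w) (by simp [hw]))

lemma isCantorSubalgebra_setOf_eq {f g : C → D} (hf : IsCantorHom hC hD f)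
    (hg : IsCantorHom hC hD g) : IsCantorSubalgebra hC {x | f x = g x} :=
  .of_child (fun x hx y hy => by simp_all [hf x y, hg x y])
    (fun x hx b => by simp_all [hf.map_child, hg.map_child])

lemma IsCantorSubalgebra.preimage {f : C → D} (hf : IsCantorHom hC hD f) {T : Set D}
    (hT : IsCantorSubalgebra hD T) : IsCantorSubalgebra hC (f ⁻¹' T) :=
  .of_child (fun x hx y hy => by simpa [Set.mem_preimage, hf x y] using hT.1 _ hx _ hy)
    (fun x hx b => by simpa [Set.mem_preimage, hf.map_child] using hT.child_mem b hx)

lemma IsCantorSubalgebra.image {f : C → D} (hf : IsCantorHom hC hD f)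
    (hS : IsCantorSubalgebra hC S) : IsCantorSubalgebra hD (f '' S) := by
  refine .of_child ?_ ?_
  · rintro _ ⟨x, hx, rfl⟩ _ ⟨y, hy, rfl⟩
    exact ⟨_, hS.1 x hx y hy, hf x y⟩
  · rintro _ ⟨x, hx, rfl⟩ b
    exact ⟨_, hS.child_mem b hx, hf.map_child b x⟩

lemma subset_genCantorSubalgebra (A : Set C) : A ⊆ genCantorSubalgebra hC A :=
  fun _ hx _ hS => hS.2 hx

lemma isCantorSubalgebra_genCantorSubalgebra (A : Set C) :
    IsCantorSubalgebra hC (genCantorSubalgebra hC A) :=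
  .of_child (fun _ hx _ hy S hS => hS.1.1 _ (hx S hS) _ (hy S hS))
    (fun _ hx b S hS => hS.1.child_mem b (hx S hS))

lemma genCantorSubalgebra_subset {A : Set C} (hS : IsCantorSubalgebra hC S) (hA : A ⊆ S) :
    genCantorSubalgebra hC A ⊆ S :=
  fun _ hx => hx S ⟨hS, hA⟩

lemma image_genCantorSubalgebra {f : C → D} (hf : IsCantorHom hC hD f) (A : Set C) :
    f '' genCantorSubalgebra hC A = genCantorSubalgebra hD (f '' A) := by
  apply (Set.image_subset_iff.2 _).antisymm
  · exact genCantorSubalgebra_subset ((isCantorSubalgebra_genCantorSubalgebra A).image hf)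
      (Set.image_mono (subset_genCantorSubalgebra A))
  · exact genCantorSubalgebra_subset ((isCantorSubalgebra_genCantorSubalgebra _).preimage hf)
      (Set.image_subset_iff.1 (subset_genCantorSubalgebra _))

end Subalgebra

section Free

variable {C D : Type} {hC : CantorStr C} {hD : CantorStr D} {r : ℕ}

lemma IsFreeCantorOn.hom_ext {b : Fin r → C} (hb : IsFreeCantorOn hC b) {X : Type}
    {hX : CantorStr X} {f g : C → X} (hf : IsCantorHom hC hX f) (hg : IsCantorHom hC hX g)
    (h : ∀ i, f (b i) = g (b i)) : f = g :=
  (hb X hX (g ∘ b)).unique ⟨hf, h⟩ ⟨hg, fun _ => rfl⟩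

lemma IsFreeCantorOn.exists_cantorEquiv {b : Fin r → C} {b' : Fin r → D}
    (hb : IsFreeCantorOn hC b) (hb' : IsFreeCantorOn hD b') :
    ∃ e : C ≃ D, IsCantorHom hC hD e := by
  obtain ⟨φ, ⟨hφ, hφb⟩, -⟩ := hb D hD b'
  obtain ⟨ψ, ⟨hψ, hψb⟩, -⟩ := hb' C hC b
  refine ⟨⟨φ, ψ, congrFun (hb.hom_ext (hψ.comp hφ) isCantorHom_id ?_),
    congrFun (hb'.hom_ext (hφ.comp hψ) isCantorHom_id ?_)⟩, hφ⟩ <;> simp [hφb, hψb]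

end Free

section Congr

variable {C D : Type} {hC : CantorStr C} {hD : CantorStr D} {e : C ≃ D}

lemma mem_cantorAut_permCongr_iff (he : IsCantorHom hC hD e) (σ : Equiv.Perm D) :
    e.symm.permCongr σ ∈ cantorAut hC ↔ σ ∈ cantorAut hD := by
  refine ⟨fun h => ?_, fun h => he.symm.comp (h.comp he)⟩
  have := he.comp ((show IsCantorHom hC hC (e.symm.permCongr σ) from h).comp he.symm)
  show IsCantorHom hD hD σ
  simpa [Function.comp_def] using this

def cantorAutCongr (he : IsCantorHom hC hD e) : cantorAut hC ≃* cantorAut hD :=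
  (e.permCongrHom.subgroupMap (cantorAut hC)).trans <| .subgroupCongr <| by
    ext σ
    exact (Subgroup.mem_map_equiv).trans (mem_cantorAut_permCongr_iff he σ)

lemma cantorAutCongr_symm_apply (he : IsCantorHom hC hD e) (u : cantorAut hD) (x : C) :
    ((cantorAutCongr he).symm u : Equiv.Perm C) x = e.symm ((u : Equiv.Perm D) (e x)) := rfl

def fixCantorCongr (he : IsCantorHom hC hD e) (X : Set C) :
    fixCantor hC X ≃* fixCantor hD (e '' X) :=
  ((cantorAutCongr he).subgroupMap (fixCantor hC X)).trans <| .subgroupCongr <| by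
    ext u
    refine Subgroup.mem_map_equiv.trans ⟨?_, ?_⟩
    · rintro h _ ⟨x, hx, rfl⟩
      simpa [cantorAutCongr_symm_apply, Equiv.symm_apply_eq] using h x hx
    · intro h x hx
      simp [cantorAutCongr_symm_apply, h (e x) (Set.mem_image_of_mem e hx)]

end Congr

namespace Stream'

variable {α : Type*}

lemma take_append_stream_of_le {w : List α} {n : ℕ} (h : n ≤ w.length) (z : Stream' α) :
    (w ++ₛ z).take n = w.take n := by
  have hw : (w.take n).length = n := by simp [h]
  rw [← List.take_append_drop n w, append_append_stream]
  simpa [hw] using (append_take (x := w.take n) (a := w.drop n ++ₛ z) (n := 0)).symm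

lemma take_append_stream_length (w : List α) (z : Stream' α) : (w ++ₛ z).take w.length = w := by
  simp [take_append_stream_of_le le_rfl]

lemma eq_append_stream_of_take_eq {x : Stream' α} {w : List α} (h : x.take w.length = w) :
    x = w ++ₛ x.drop w.length := by
  conv_lhs => rw [← append_take_drop w.length x, h]

lemma take_eq_take_of_le {x y : Stream' α} {m n : ℕ} (h : x.take n = y.take n) (hmn : m ≤ n) :
    x.take m = y.take m := by
  have := congrArg (List.take m) h
  simpa [hmn] using this

lemma isPrefix_of_append_stream_eq {w v : List α} {z z' : Stream' α} (h : w ++ₛ z = v ++ₛ z')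
    (hle : w.length ≤ v.length) : w <+: v := by
  have := take_append_stream_length v z'
  rw [← h, ← Nat.add_sub_cancel' hle, ← append_take] at this
  exact ⟨_, this⟩

lemma eq_of_forall_append_stream_eq {w w' : List Bool} (h : ∀ z, w ++ₛ z = w' ++ₛ z) :
    w = w' := by
  induction w generalizing w' with
  | nil =>
    cases w' with
    | nil => rfl
    | cons b t => simpa using congrArg head (h (const !b))
  | cons a s ih =>
    cases w' with
    | nil => simpa using congrArg head (h (const !a))
    | cons b t =>
      obtain rfl : a = b := by simpa using congrArg head (h (const a))
      rw [ih fun z => congrArg tail (h z)]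

end Stream'

def IsPrefixMapAt (n : ℕ) (f : Stream' Bool → Stream' Bool) : Prop :=
  ∀ w : List Bool, n ≤ w.length → ∃ v : List Bool, ∀ z, f (w ++ₛ z) = v ++ₛ z

def IsPrefixMap (f : Stream' Bool → Stream' Bool) : Prop := ∃ n, IsPrefixMapAt n f

def IsCylinder (N : ℕ) (A : Set (Stream' Bool)) : Prop :=
  ∀ x y : Stream' Bool, x.take N = y.take N → x ∈ A → y ∈ A

section PrefixMaps

variable {f g : Stream' Bool → Stream' Bool} {m n N : ℕ} {A : Set (Stream' Bool)}

lemma IsPrefixMapAt.mono (hf : IsPrefixMapAt n f) (hnm : n ≤ m) : IsPrefixMapAt m f :=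
  fun w hw => hf w (hnm.trans hw)

lemma isPrefixMapAt_append (u : List Bool) : IsPrefixMapAt 0 (u ++ₛ ·) :=
  fun w _ => ⟨u ++ w, fun z => (Stream'.append_append_stream u w z).symm⟩

lemma isPrefixMapAt_id : IsPrefixMapAt 0 id := isPrefixMapAt_append []

lemma isPrefixMapAt_tail : IsPrefixMapAt 1 Stream'.tail
  | _ :: w, _ => ⟨w, fun _ => rfl⟩

lemma IsPrefixMapAt.cons (b : Bool) (hf : IsPrefixMapAt n f) :
    IsPrefixMapAt n (fun x => Stream'.cons b (f x)) := fun w hw => by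
  obtain ⟨v, hv⟩ := hf w hw
  exact ⟨b :: v, fun z => by dsimp only; rw [hv]; rfl⟩

lemma IsPrefixMapAt.branch (b : Bool) (hf : IsPrefixMapAt (n + 1) f) :
    IsPrefixMapAt n (fun z => f (Stream'.cons b z)) :=
  fun w hw => hf (b :: w) (by simpa using hw)

lemma IsPrefixMapAt.glue {g : Bool → Stream' Bool → Stream' Bool}
    (hg : ∀ b, IsPrefixMapAt n (g b)) : IsPrefixMapAt (n + 1) (fun x => g x.head x.tail)
  | b :: w, hw => hg b w (by simpa using hw)

lemma IsPrefixMapAt.comp (hg : IsPrefixMapAt m g) (hf : IsPrefixMapAt n f) :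
    IsPrefixMapAt (n + m) (g ∘ f) := fun w hw => by
  obtain ⟨v, hv⟩ := hf (w.take n) (by simp; omega)
  obtain ⟨v', hv'⟩ := hg (v ++ w.drop n) (by simp; omega)
  refine ⟨v', fun z => ?_⟩
  rw [Function.comp_apply, ← List.take_append_drop n w, Stream'.append_append_stream, hv,
    ← Stream'.append_append_stream, hv']

open Classical in
lemma IsPrefixMapAt.ite (hA : IsCylinder N A) (hN : N ≤ n) (hf : IsPrefixMapAt n f)
    (hg : IsPrefixMapAt n g) : IsPrefixMapAt n (fun x => if x ∈ A then f x else g x) :=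
  fun w hw => by
  have hmem (z z' : Stream' Bool) : w ++ₛ z ∈ A → w ++ₛ z' ∈ A := hA _ _ <| by
    rw [Stream'.take_append_stream_of_le (hN.trans hw),
      Stream'.take_append_stream_of_le (hN.trans hw)]
  by_cases h : w ++ₛ Stream'.const false ∈ A
  · obtain ⟨v, hv⟩ := hf w hw
    exact ⟨v, fun z => by dsimp only; rw [if_pos (hmem _ z h), hv]⟩
  · obtain ⟨v, hv⟩ := hg w hw
    exact ⟨v, fun z => by dsimp only; rw [if_neg fun h' => h (hmem z _ h'), hv]⟩

lemma IsPrefixMapAt.exists_eq_append (hf : IsPrefixMapAt 0 f) : ∃ v, f = (v ++ₛ ·) := by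
  obtain ⟨v, hv⟩ := hf [] le_rfl
  exact ⟨v, funext hv⟩

lemma isPrefixMap_append (u : List Bool) : IsPrefixMap (u ++ₛ ·) :=
  ⟨0, isPrefixMapAt_append u⟩

lemma isPrefixMap_id : IsPrefixMap id := ⟨0, isPrefixMapAt_id⟩

lemma IsPrefixMap.comp (hg : IsPrefixMap g) (hf : IsPrefixMap f) : IsPrefixMap (g ∘ f) :=
  let ⟨_, hg⟩ := hg; let ⟨_, hf⟩ := hf; ⟨_, hg.comp hf⟩

lemma IsPrefixMap.cons (b : Bool) (hf : IsPrefixMap f) :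
    IsPrefixMap (fun x => Stream'.cons b (f x)) :=
  let ⟨_, hf⟩ := hf; ⟨_, hf.cons b⟩

lemma IsPrefixMap.branch (b : Bool) (hf : IsPrefixMap f) :
    IsPrefixMap (fun z => f (Stream'.cons b z)) :=
  let ⟨n, hf⟩ := hf; ⟨n, (hf.mono n.le_succ).branch b⟩

lemma IsPrefixMap.glue {g : Bool → Stream' Bool → Stream' Bool}
    (hg : ∀ b, IsPrefixMap (g b)) : IsPrefixMap (fun x => g x.head x.tail) := by
  choose n hn using hg
  exact ⟨max (n false) (n true) + 1, .glue fun b => (hn b).mono (by cases b <;> simp)⟩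

open Classical in
lemma IsPrefixMap.ite (hA : IsCylinder N A) (hf : IsPrefixMap f) (hg : IsPrefixMap g) :
    IsPrefixMap (fun x => if x ∈ A then f x else g x) := by
  obtain ⟨n, hf⟩ := hf
  obtain ⟨m, hg⟩ := hg
  exact ⟨max N (max n m), .ite hA (by omega) (hf.mono (by omega)) (hg.mono (by omega))⟩

def LeavesBoundedBy (N : ℕ) (f : Stream' Bool → Stream' Bool) : Prop :=
  ∀ x, ∃ u v : List Bool,
    v.length ≤ N ∧ (∃ z, x = u ++ₛ z) ∧ ∀ z, f (u ++ₛ z) = v ++ₛ z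

lemma LeavesBoundedBy.mono (hf : LeavesBoundedBy N f) (hNm : N ≤ m) : LeavesBoundedBy m f :=
  fun x => let ⟨u, v, hv, hx, huv⟩ := hf x; ⟨u, v, hv.trans hNm, hx, huv⟩

lemma IsPrefixMapAt.exists_leavesBoundedBy (hf : IsPrefixMapAt n f) :
    ∃ N, LeavesBoundedBy N f := by
  induction n generalizing f with
  | zero =>
    obtain ⟨v, rfl⟩ := hf.exists_eq_append
    exact ⟨v.length, fun x => ⟨[], v, le_rfl, ⟨x, rfl⟩, fun _ => rfl⟩⟩
  | succ n ih =>
    choose N hN using fun b => ih (hf.branch b)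
    refine ⟨max (N false) (N true), fun x => ?_⟩
    obtain ⟨u, v, hv, ⟨z, hz⟩, huv⟩ := hN x.head x.tail
    refine ⟨x.head :: u, v, hv.trans (by cases x.head <;> simp), ⟨z, ?_⟩, huv⟩
    rw [← Stream'.eta x, hz]
    rfl

lemma IsPrefixMap.exists_leavesBoundedBy (hf : IsPrefixMap f) : ∃ N, LeavesBoundedBy N f :=
  let ⟨_, hf⟩ := hf; hf.exists_leavesBoundedBy

lemma IsCylinder.compl (hA : IsCylinder N A) : IsCylinder N Aᶜ :=
  fun x y h hx hy => hx (hA y x h.symm hy)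

lemma IsCylinder.take_append_mem (hA : IsCylinder N A) {x : Stream' Bool} (hx : x ∈ A)
    (z : Stream' Bool) : x.take N ++ₛ z ∈ A :=
  hA x _ (by rw [Stream'.take_append_stream_of_le (by simp)]; simp) hx

lemma IsCylinder.preimage_cons (hA : IsCylinder (N + 1) A) (b : Bool) :
    IsCylinder N {z | Stream'.cons b z ∈ A} :=
  fun x y h => hA _ _ (by simp [h])

lemma IsCylinder.eq_univ_of_zero (hA : IsCylinder 0 A) (hne : A.Nonempty) : A = Set.univ :=
  let ⟨x, hx⟩ := hne; Set.eq_univ_of_forall fun y => hA x y rfl hx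

end PrefixMaps

def prefixPerms : Subgroup (Equiv.Perm (Stream' Bool)) where
  carrier := {σ | IsPrefixMap σ ∧ IsPrefixMap σ.symm}
  mul_mem' := fun ⟨hσ, hσ'⟩ ⟨hτ, hτ'⟩ => ⟨hσ.comp hτ, hτ'.comp hσ'⟩
  one_mem' := ⟨isPrefixMap_id, isPrefixMap_id⟩
  inv_mem' := fun ⟨hσ, hσ'⟩ => ⟨hσ', hσ⟩

structure PrefixEmbedding (B : Set (Stream' Bool)) where
  toFun : Stream' Bool → Stream' Bool
  invFun : Stream' Bool → Stream' Bool
  isPrefixMap_toFun : IsPrefixMap toFun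
  isPrefixMap_invFun : IsPrefixMap invFun
  toFun_mem (x : Stream' Bool) : toFun x ∈ B
  invFun_toFun (x : Stream' Bool) : invFun (toFun x) = x
  toFun_invFun {y : Stream' Bool} : y ∈ B → toFun (invFun y) = y

namespace PrefixEmbedding

def univ : PrefixEmbedding Set.univ where
  toFun := id
  invFun := id
  isPrefixMap_toFun := isPrefixMap_id
  isPrefixMap_invFun := isPrefixMap_id
  toFun_mem := Set.mem_univ
  invFun_toFun _ := rfl
  toFun_invFun _ := rfl

def cons {B : Set (Stream' Bool)} (b : Bool) (e : PrefixEmbedding B) :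
    PrefixEmbedding {y | y.head = b ∧ y.tail ∈ B} where
  toFun x := Stream'.cons b (e.toFun x)
  invFun y := e.invFun y.tail
  isPrefixMap_toFun := e.isPrefixMap_toFun.cons b
  isPrefixMap_invFun := e.isPrefixMap_invFun.comp ⟨1, isPrefixMapAt_tail⟩
  toFun_mem x := ⟨rfl, e.toFun_mem x⟩
  invFun_toFun x := e.invFun_toFun x
  toFun_invFun := by
    rintro y ⟨rfl, hy⟩
    rw [e.toFun_invFun hy, Stream'.eta]

def glue {B : Bool → Set (Stream' Bool)} (e : ∀ b, PrefixEmbedding (B b)) :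
    PrefixEmbedding {y | y.tail ∈ B y.head} where
  toFun x := Stream'.cons x.head ((e x.head).toFun x.tail)
  invFun y := Stream'.cons y.head ((e y.head).invFun y.tail)
  isPrefixMap_toFun := .glue fun b => (e b).isPrefixMap_toFun.cons b
  isPrefixMap_invFun := .glue fun b => (e b).isPrefixMap_invFun.cons b
  toFun_mem x := (e x.head).toFun_mem x.tail
  invFun_toFun x := by
    change Stream'.cons x.head ((e x.head).invFun ((e x.head).toFun x.tail)) = x
    rw [invFun_toFun, Stream'.eta]
  toFun_invFun {y} hy := by
    change Stream'.cons y.head ((e y.head).toFun ((e y.head).invFun y.tail)) = y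
    rw [(e y.head).toFun_invFun hy, Stream'.eta]

theorem nonempty_of_isCylinder {N : ℕ} {B : Set (Stream' Bool)} (hB : IsCylinder N B)
    (hne : B.Nonempty) : Nonempty (PrefixEmbedding B) := by
  induction N generalizing B with
  | zero => exact hB.eq_univ_of_zero hne ▸ ⟨univ⟩
  | succ N ih =>
    have hcons (y : Stream' Bool) : y ∈ B ↔ Stream'.cons y.head y.tail ∈ B := by
      rw [Stream'.eta]
    by_cases hall : ∀ b, {z | Stream'.cons b z ∈ B}.Nonempty
    · have e := fun b => (ih (hB.preimage_cons b) (hall b)).some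
      exact (Set.ext hcons : B = _) ▸ ⟨glue e⟩
    · obtain ⟨b, hb⟩ := not_forall.1 hall
      have hB' : B = {y | y.head = !b ∧ y.tail ∈ {z | Stream'.cons (!b) z ∈ B}} := by
        ext y
        rw [hcons]
        cases hy : y.head <;> cases b <;> simp_all [Set.not_nonempty_iff_eq_empty, Set.ext_iff]
      obtain ⟨e⟩ := ih (hB.preimage_cons !b) <| by
        obtain ⟨y, hy⟩ := hne
        rw [hB'] at hy
        exact ⟨_, hy.2⟩
      exact hB' ▸ ⟨e.cons !b⟩

end PrefixEmbedding

section Fixing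

variable {α : Type*} {A : Set α}

lemma Equiv.Perm.apply_notMem_of_fixes {σ : Equiv.Perm α} (hσ : ∀ x ∈ A, σ x = x) {y : α} (hy : y ∉ A) :
    σ y ∉ A :=
  fun h => hy (σ.injective (hσ _ h) ▸ h)

lemma Equiv.Perm.symm_apply_notMem_of_fixes {σ : Equiv.Perm α} (hσ : ∀ x ∈ A, σ x = x) {y : α} (hy : y ∉ A) :
    σ.symm y ∉ A :=
  fun h => hy (by rwa [← hσ _ h, σ.apply_symm_apply] at h)

lemma apply_eq_of_mem_subgroupOf_fixingSubgroup {H : Subgroup (Equiv.Perm α)} {σ : H}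
    (hσ : σ ∈ (fixingSubgroup (Equiv.Perm α) A).subgroupOf H) :
    ∀ x ∈ A, (σ : Equiv.Perm α) x = x :=
  (mem_fixingSubgroup_iff _).1 (Subgroup.mem_subgroupOf.1 hσ)

end Fixing

namespace PrefixEmbedding

variable {A : Set (Stream' Bool)} (e : PrefixEmbedding Aᶜ)

open Classical in
noncomputable def extend (τ : Equiv.Perm (Stream' Bool)) : Equiv.Perm (Stream' Bool) where
  toFun x := if x ∈ A then x else e.toFun (τ (e.invFun x))
  invFun x := if x ∈ A then x else e.toFun (τ.symm (e.invFun x))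
  left_inv x := by
    by_cases hx : x ∈ A
    · simp [hx]
    · have := e.toFun_mem (τ (e.invFun x))
      simp_all [e.invFun_toFun, e.toFun_invFun]
  right_inv x := by
    by_cases hx : x ∈ A
    · simp [hx]
    · have := e.toFun_mem (τ.symm (e.invFun x))
      simp_all [e.invFun_toFun, e.toFun_invFun]

lemma extend_apply_of_notMem (τ : Equiv.Perm (Stream' Bool)) {x : Stream' Bool} (hx : x ∉ A) :
    e.extend τ x = e.toFun (τ (e.invFun x)) :=
  if_neg hx

def restrict (σ : Equiv.Perm (Stream' Bool)) (hσ : ∀ x ∈ A, σ x = x) :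
    Equiv.Perm (Stream' Bool) where
  toFun x := e.invFun (σ (e.toFun x))
  invFun x := e.invFun (σ.symm (e.toFun x))
  left_inv x := by
    change e.invFun (σ.symm (e.toFun (e.invFun (σ (e.toFun x))))) = x
    rw [e.toFun_invFun (σ.apply_notMem_of_fixes hσ (e.toFun_mem x)), σ.symm_apply_apply,
      e.invFun_toFun]
  right_inv x := by
    change e.invFun (σ (e.toFun (e.invFun (σ.symm (e.toFun x))))) = x
    rw [e.toFun_invFun (σ.symm_apply_notMem_of_fixes hσ (e.toFun_mem x)), σ.apply_symm_apply,
      e.invFun_toFun]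

noncomputable def fixingEquiv {N : ℕ} (hA : IsCylinder N A) :
    (fixingSubgroup (Equiv.Perm (Stream' Bool)) A).subgroupOf prefixPerms ≃* prefixPerms where
  toFun σ := ⟨e.restrict σ (apply_eq_of_mem_subgroupOf_fixingSubgroup σ.2),
    e.isPrefixMap_invFun.comp (σ.1.2.1.comp e.isPrefixMap_toFun),
    e.isPrefixMap_invFun.comp (σ.1.2.2.comp e.isPrefixMap_toFun)⟩
  invFun τ := ⟨⟨e.extend τ, .ite hA isPrefixMap_id
      (e.isPrefixMap_toFun.comp (τ.2.1.comp e.isPrefixMap_invFun)),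
    .ite hA isPrefixMap_id (e.isPrefixMap_toFun.comp (τ.2.2.comp e.isPrefixMap_invFun))⟩,
    Subgroup.mem_subgroupOf.2 <| (mem_fixingSubgroup_iff _).2 fun x hx => if_pos hx⟩
  left_inv σ := by
    refine Subtype.ext <| Subtype.ext <| Equiv.ext fun x => ?_
    have hσ := apply_eq_of_mem_subgroupOf_fixingSubgroup σ.2
    by_cases hx : x ∈ A
    · exact (if_pos hx).trans (hσ x hx).symm
    · change e.extend (e.restrict _ hσ) x = _
      rw [e.extend_apply_of_notMem _ hx]
      change e.toFun (e.invFun (σ.1.1 (e.toFun (e.invFun x)))) = σ.1.1 x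
      rw [e.toFun_invFun hx, e.toFun_invFun (σ.1.1.apply_notMem_of_fixes hσ hx)]
  right_inv τ := Subtype.ext <| Equiv.ext fun x => by
    change e.invFun (e.extend τ (e.toFun x)) = τ.1 x
    rw [e.extend_apply_of_notMem τ (e.toFun_mem x), e.invFun_toFun, e.invFun_toFun]
  map_mul' σ σ' := Subtype.ext <| Equiv.ext fun x =>
    have hσ' := apply_eq_of_mem_subgroupOf_fixingSubgroup σ'.2
    (congrArg (fun y => e.invFun (σ.1.1 y))
      (e.toFun_invFun (σ'.1.1.apply_notMem_of_fixes hσ' (e.toFun_mem x)))).symm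

end PrefixEmbedding

def PrefixMap : Type := {f : Stream' Bool → Stream' Bool // IsPrefixMap f}

namespace PrefixMap

def branch (b : Bool) (f : PrefixMap) : PrefixMap :=
  ⟨fun z => f.1 (Stream'.cons b z), f.2.branch b⟩

def cantorStr : CantorStr PrefixMap where
  mu :=
    { toFun := fun p => ⟨fun x => cond x.head p.2.1 p.1.1 x.tail,
        IsPrefixMap.glue (g := fun b => cond b p.2.1 p.1.1) fun b => by
          cases b; exacts [p.1.2, p.2.2]⟩
      invFun := fun f => (f.branch false, f.branch true)
      left_inv := fun _ => rfl
      right_inv := fun f => Subtype.ext <| funext fun x => by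
        rw [← Stream'.eta x]
        cases x.head <;> rfl }

lemma child_eq_branch (b : Bool) (f : PrefixMap) : cantorStr.child b f = f.branch b := by
  cases b <;> rfl

lemma descend_val (w : List Bool) (f : PrefixMap) :
    (cantorStr.descend w f).1 = fun z => f.1 (w ++ₛ z) := by
  induction w generalizing f with
  | nil => rfl
  | cons b w ih => rw [CantorStr.descend_cons, ih, child_eq_branch]; rfl

def idMap : PrefixMap := ⟨id, isPrefixMap_id⟩

def prepend (w : List Bool) : PrefixMap := ⟨(w ++ₛ ·), isPrefixMap_append w⟩

lemma prepend_injective : Function.Injective prepend :=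
  fun _ _ h => Stream'.eq_of_forall_append_stream_eq fun z => congrFun (congrArg Subtype.val h) z

lemma descend_idMap (w : List Bool) : cantorStr.descend w idMap = prepend w :=
  Subtype.ext (descend_val w idMap)

lemma descend_prepend (v t : List Bool) : cantorStr.descend t (prepend v) = prepend (v ++ t) := by
  rw [← descend_idMap, ← descend_idMap, CantorStr.descend_append]

lemma child_prepend (b : Bool) (w : List Bool) :
    cantorStr.child b (prepend w) = prepend (w ++ [b]) :=
  descend_prepend w [b]

lemma exists_descend_eq_prepend {n : ℕ} {f : PrefixMap} (hf : IsPrefixMapAt n f.1)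
    {u : List Bool} (hu : n ≤ u.length) : ∃ v, cantorStr.descend u f = prepend v := by
  obtain ⟨v, hv⟩ := hf u hu
  exact ⟨v, Subtype.ext ((descend_val u f).trans (funext hv))⟩

lemma mem_of_idMap_mem {S : Set PrefixMap}
    (hS : IsCantorSubalgebra cantorStr S) (h : idMap ∈ S) (f : PrefixMap) : f ∈ S := by
  obtain ⟨n, hn⟩ := f.2
  refine hS.mem_of_forall_descend_mem (n := n) fun u hu => ?_
  obtain ⟨v, hv⟩ := exists_descend_eq_prepend hn hu.ge
  rw [hv, ← descend_idMap]
  exact hS.descend_mem v h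

open Classical in
noncomputable def depth (f : PrefixMap) : ℕ := Nat.find f.2

lemma isPrefixMapAt_depth (f : PrefixMap) : IsPrefixMapAt f.depth f.1 := by
  classical exact Nat.find_spec f.2

lemma depth_child_lt {f : PrefixMap} (hf : ¬∃ w, f = prepend w) (b : Bool) :
    (cantorStr.child b f).depth < f.depth := by
  classical
  obtain ⟨n, hn⟩ : ∃ n, f.depth = n + 1 := by
    refine Nat.exists_eq_add_one.2 (Nat.pos_of_ne_zero fun h0 => hf ?_)
    have := f.isPrefixMapAt_depth
    rw [h0] at this
    obtain ⟨v, hv⟩ := this.exists_eq_append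
    exact ⟨v, Subtype.ext hv⟩
  have hb : IsPrefixMapAt n (cantorStr.child b f).1 := by
    rw [child_eq_branch]
    exact (hn ▸ f.isPrefixMapAt_depth).branch b
  rw [hn]
  exact Nat.lt_succ_of_le (Nat.find_min' _ hb)

section Lift

variable {X : Type} (hX : CantorStr X) (x₀ : X)

open Classical in
noncomputable def lift (f : PrefixMap) : X :=
  if h : ∃ w, f = prepend w then hX.descend h.choose x₀
  else hX.mu (lift (cantorStr.child false f), lift (cantorStr.child true f))
termination_by f.depth
decreasing_by all_goals exact depth_child_lt h _

lemma lift_prepend (w : List Bool) : lift hX x₀ (prepend w) = hX.descend w x₀ := by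
  have h : ∃ v, prepend w = prepend v := ⟨w, rfl⟩
  rw [lift, dif_pos h, ← prepend_injective h.choose_spec]

lemma isCantorHom_lift : IsCantorHom cantorStr hX (lift hX x₀) := by
  intro f g
  by_cases h : ∃ w, cantorStr.mu (f, g) = prepend w
  · obtain ⟨w, hw⟩ := h
    have hchild (b : Bool) : lift hX x₀ (cond b g f) = hX.child b (hX.descend w x₀) := by
      rw [← cantorStr.child_mu, hw, child_prepend, lift_prepend, CantorStr.descend_concat]
    rw [hw, lift_prepend, ← hX.mu_child (hX.descend w x₀), ← hchild false, ← hchild true]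
    rfl
  · rw [lift, dif_neg h, cantorStr.child_mu, cantorStr.child_mu]
    rfl

lemma lift_idMap : lift hX x₀ idMap = x₀ := lift_prepend hX x₀ []

end Lift

theorem isFreeCantorOn_idMap : IsFreeCantorOn cantorStr ![idMap] := by
  intro X hX x
  refine ⟨lift hX (x 0), ⟨isCantorHom_lift hX _, fun i => ?_⟩,
    fun g ⟨hg, hg0⟩ => funext ?_⟩
  · fin_cases i
    exact lift_idMap hX _
  · exact mem_of_idMap_mem (isCantorSubalgebra_setOf_eq hg (isCantorHom_lift hX _))
      ((hg0 0).trans (lift_idMap hX _).symm)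

def postcomp {σ : Stream' Bool → Stream' Bool} (hσ : IsPrefixMap σ) (f : PrefixMap) :
    PrefixMap :=
  ⟨σ ∘ f.1, hσ.comp f.2⟩

lemma isCantorHom_postcomp {σ : Stream' Bool → Stream' Bool} (hσ : IsPrefixMap σ) :
    IsCantorHom cantorStr cantorStr (postcomp hσ) := fun f g =>
  Subtype.ext <| funext fun x => by
    rw [← Stream'.eta x]
    cases x.head <;> rfl

lemma eq_postcomp {G : PrefixMap → PrefixMap} (hG : IsCantorHom cantorStr cantorStr G)
    (f : PrefixMap) : G f = postcomp (G idMap).2 f :=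
  mem_of_idMap_mem (isCantorSubalgebra_setOf_eq hG (isCantorHom_postcomp _)) rfl f

lemma aut_apply (v : cantorAut cantorStr) (f : PrefixMap) (x : Stream' Bool) :
    ((v : Equiv.Perm PrefixMap) f).1 x = ((v : Equiv.Perm PrefixMap) idMap).1 (f.1 x) :=
  congrFun (congrArg Subtype.val (eq_postcomp v.2 f)) x

open Equiv in
noncomputable def autEquiv : cantorAut cantorStr ≃* prefixPerms where
  toFun v :=
    ⟨{ toFun := ((v : Perm PrefixMap) idMap).1
       invFun := ((↑v⁻¹ : Perm PrefixMap) idMap).1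
       left_inv := fun x => by
         rw [← aut_apply, Subgroup.coe_inv, Perm.coe_inv, Equiv.symm_apply_apply]; rfl
       right_inv := fun x => by
         rw [← aut_apply, Subgroup.coe_inv, Perm.coe_inv, Equiv.apply_symm_apply]; rfl },
      ((v : Perm PrefixMap) idMap).2, ((↑v⁻¹ : Perm PrefixMap) idMap).2⟩
  invFun σ :=
    ⟨{ toFun := postcomp σ.2.1
       invFun := postcomp σ.2.2
       left_inv := fun f => Subtype.ext <| funext fun x => σ.1.symm_apply_apply (f.1 x)
       right_inv := fun f => Subtype.ext <| funext fun x => σ.1.apply_symm_apply (f.1 x) },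
      isCantorHom_postcomp σ.2.1⟩
  left_inv v := Subtype.ext <| Equiv.ext fun f => (eq_postcomp v.2 f).symm
  right_inv σ := rfl
  map_mul' v w := Subtype.ext <| Equiv.ext fun x => aut_apply v _ x

def withRangeIn (A : Set (Stream' Bool)) : Set PrefixMap := {f | ∀ x, f.1 x ∈ A}

lemma isCantorSubalgebra_withRangeIn (A : Set (Stream' Bool)) :
    IsCantorSubalgebra cantorStr (withRangeIn A) :=
  .of_child
    (fun f hf g hg x => by
      change cond x.head g.1 f.1 x.tail ∈ A
      cases x.head
      exacts [hf _, hg _])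
    (fun f hf b z => by rw [child_eq_branch]; exact hf _)

variable {F : Set PrefixMap} {N : ℕ}

lemma exists_leavesBoundedBy_of_finite (hF : F.Finite) :
    ∃ N, ∀ f ∈ F, LeavesBoundedBy N f.1 :=
  ((hF.eventually_all (l := Filter.atTop) (p := fun f N => LeavesBoundedBy N f.1)).2
    fun f _ => let ⟨N, hN⟩ := f.2.exists_leavesBoundedBy
      Filter.eventually_atTop.2 ⟨N, fun _ h => hN.mono h⟩).exists

lemma isCylinder_iUnion_range (hN : ∀ f ∈ F, LeavesBoundedBy N f.1) :
    IsCylinder N (⋃ f ∈ F, Set.range f.1) := by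
  intro y y' hyy' hy
  simp only [Set.mem_iUnion, Set.mem_range] at hy ⊢
  obtain ⟨f, hf, x, rfl⟩ := hy
  obtain ⟨u, v, hv, ⟨z, rfl⟩, huv⟩ := hN f hf x
  have hy' : y'.take v.length = v := by
    rw [← Stream'.take_eq_take_of_le hyy' hv, huv, Stream'.take_append_stream_length]
  exact ⟨f, hf, u ++ₛ y'.drop v.length, by
    rw [huv]; exact (Stream'.eq_append_stream_of_take_eq hy').symm⟩

lemma exists_descend_eq_prepend_of_le (f : PrefixMap) {u : List Bool}
    (hu : f.depth + N ≤ u.length) :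
    ∃ w, cantorStr.descend u f = prepend w ∧ N ≤ w.length := by
  obtain ⟨v, hv⟩ := exists_descend_eq_prepend f.isPrefixMapAt_depth (u := u.take f.depth)
    (by simp; omega)
  refine ⟨v ++ u.drop f.depth, ?_, by simp; omega⟩
  conv_lhs => rw [← List.take_append_drop f.depth u]
  rw [CantorStr.descend_append, hv, descend_prepend]

lemma withRangeIn_subset_genCantorSubalgebra (hN : ∀ f ∈ F, LeavesBoundedBy N f.1) :
    withRangeIn (⋃ f ∈ F, Set.range f.1) ⊆ genCantorSubalgebra cantorStr F := by
  intro f hf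
  have hS := isCantorSubalgebra_genCantorSubalgebra (hC := cantorStr) F
  refine hS.mem_of_forall_descend_mem (n := f.depth + N) fun u hu => ?_
  obtain ⟨w, hw, hlen⟩ := exists_descend_eq_prepend_of_le f hu.ge
  have hwz : w ++ₛ Stream'.const false = f.1 (u ++ₛ Stream'.const false) := by
    rw [← congrFun (descend_val u f), hw]; rfl
  obtain ⟨g, hg, x, hx⟩ : ∃ g ∈ F, ∃ x, g.1 x = w ++ₛ Stream'.const false := by
    simpa [hwz] using hf (u ++ₛ Stream'.const false)
  obtain ⟨u', v, hv, ⟨z, rfl⟩, huv⟩ := hN g hg x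
  rw [huv] at hx
  obtain ⟨t, rfl⟩ := Stream'.isPrefix_of_append_stream_eq hx (hv.trans hlen)
  have hg' : prepend v = cantorStr.descend u' g :=
    Subtype.ext ((funext huv).symm.trans (descend_val u' g).symm)
  rw [hw, ← descend_prepend, hg']
  exact hS.descend_mem t (hS.descend_mem u' (subset_genCantorSubalgebra F hg))

lemma genCantorSubalgebra_eq_withRangeIn (hN : ∀ f ∈ F, LeavesBoundedBy N f.1) :
    genCantorSubalgebra cantorStr F = withRangeIn (⋃ f ∈ F, Set.range f.1) :=
  (genCantorSubalgebra_subset (isCantorSubalgebra_withRangeIn _)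
    fun _ hf x => Set.mem_biUnion hf (Set.mem_range_self x)).antisymm
    (withRangeIn_subset_genCantorSubalgebra hN)

lemma map_fixCantor_withRangeIn {N : ℕ} {A : Set (Stream' Bool)} (hA : IsCylinder N A) :
    (fixCantor cantorStr (withRangeIn A)).map autEquiv.toMonoidHom =
      (fixingSubgroup (Equiv.Perm (Stream' Bool)) A).subgroupOf prefixPerms := by
  ext σ
  rw [Subgroup.mem_map_equiv, Subgroup.mem_subgroupOf, mem_fixingSubgroup_iff]
  constructor
  · intro h x hx
    have := congrFun (congrArg Subtype.val
      (h (prepend (x.take N)) (hA.take_append_mem hx))) (x.drop N)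
    change σ.1 (x.take N ++ₛ x.drop N) = x.take N ++ₛ x.drop N at this
    rwa [Stream'.append_take_drop] at this
  · exact fun h f hf => Subtype.ext <| funext fun x => h _ (hf x)

theorem nonempty_fixCantor_genCantorSubalgebra_mulEquiv {F : Set PrefixMap} (hF : F.Finite)
    (hne : genCantorSubalgebra cantorStr F ≠ Set.univ) :
    Nonempty (fixCantor cantorStr (genCantorSubalgebra cantorStr F) ≃* cantorAut cantorStr) := by
  obtain ⟨N, hN⟩ := exists_leavesBoundedBy_of_finite hF
  have hA := isCylinder_iUnion_range hN
  rw [genCantorSubalgebra_eq_withRangeIn hN] at hne ⊢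
  obtain ⟨e⟩ := PrefixEmbedding.nonempty_of_isCylinder hA.compl <|
    Set.nonempty_compl.2 fun h => hne (by simp [withRangeIn, h])
  exact ⟨(autEquiv.subgroupMap _).trans <|
    (MulEquiv.subgroupCongr (map_fixCantor_withRangeIn hA)).trans <|
    (e.fixingEquiv hA).trans autEquiv.symm⟩

end PrefixMap

/-- **Pointwise stabilizers of clones are copies of Thompson's group `V`**: for a clone
`X` of a Cantor algebra `C` free on one generator, the pointwise stabilizer `V(X)` is
isomorphic as a group to `Aut(C)`. -/
theorem clone_stabilizer_iso {C : Type} (hC : CantorStr C) (c : C)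
    (hfree : IsFreeCantorOn hC ![c]) (X : Set C) (hX : IsClone hC X) :
    Nonempty (↥(fixCantor hC X) ≃* ↥(cantorAut hC)) := by
  obtain ⟨-, -, hX_ne, F, hF, rfl⟩ := hX
  obtain ⟨e, he⟩ := hfree.exists_cantorEquiv PrefixMap.isFreeCantorOn_idMap
  have himage := image_genCantorSubalgebra he F
  obtain ⟨φ⟩ := PrefixMap.nonempty_fixCantor_genCantorSubalgebra_mulEquiv (hF.image e) <| by
    rw [← himage, ← Set.image_univ_of_surjective e.surjective]
    exact fun h => hX_ne (e.injective.image_injective h)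
  exact ⟨(fixCantorCongr he _).trans <| (MulEquiv.subgroupCongr (by rw [himage])).trans <|
    φ.trans (cantorAutCongr he).symm⟩
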